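/- arXiv:math/0307162 — 2 statements merged into one kernel-verified Lean document; each statement's English description precedes it below -/
import Mathlib

section
/- Let s^(1), ..., s^(n) be holomorphic vector fields on an open set U ⊆ ℂⁿ, s^(i) = Σ_k s^{ik} ∂/∂z^k, with the matrix S = (s^{ik}) invertible everywhere on U, and let σ = S^{-1} with entries s_{ij}. Then the symmetry condition ∂s_{ij}/∂z^l = ∂s_{lj}/∂z^i for all i, j, l holds if and only if the Lie brackets [s^(i), s^(k)] vanish for all i, k, which in components reads s^{ij} ∂s^{kl}/∂z^j = s^{kj} ∂s^{il}/∂z^j for all i, k, l. -/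
open Matrix Complex

/-- The Wirtinger derivative `∂f/∂zⁱ` of a function `f : ℂⁿ → ℂ`. -/
noncomputable def wderiv {n : ℕ} (i : Fin n) (f : (Fin n → ℂ) → ℂ) (z : Fin n → ℂ) : ℂ :=
  (fderiv ℝ f z (Pi.single i 1) - Complex.I * fderiv ℝ f z (Pi.single i Complex.I)) / 2

/-!
Everything happens pointwise. On holomorphic functions the Wirtinger derivatives are the complex
partial derivatives, and `∂ₗσ = -σ (∂ₗS) σ`. Let `J_b = (∂ₗ s^{pb})_{p,l}` be the Jacobian of the
`b`-th column of `S`. Then the Jacobian of the `j`-th column of `σ` is `-∑_b σ_{bj} • σ J_b`, so,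
`σ` being invertible, the symmetry condition says that every `σ J_b` is symmetric. Congruence by
the invertible `S` preserves symmetry, and `S (σ J_b) Sᵀ = J_b Sᵀ`, the transpose of `S J_bᵀ`,
whose `(i, k)` entry is `∑_j s^{ij} ∂_j s^{kb}`: its symmetry is the vanishing of the `b`-th
component of all brackets `[s^(i), s^(k)]`.
-/

open Filter Topology

theorem wderiv_eq_fderiv {n : ℕ} {f : (Fin n → ℂ) → ℂ} {z : Fin n → ℂ}
    (hf : DifferentiableAt ℂ f z) (l : Fin n) :
    wderiv l f z = fderiv ℂ f z (Pi.single l 1) := by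
  have hI : (Pi.single l Complex.I : Fin n → ℂ) = Complex.I • Pi.single l 1 := by
    rw [← Pi.single_smul', smul_eq_mul, mul_one]
  rw [wderiv, hf.fderiv_restrictScalars ℝ, ContinuousLinearMap.coe_restrictScalars', hI,
    map_smul, smul_eq_mul, ← mul_assoc, Complex.I_mul_I]
  ring

namespace Matrix

variable {ι m R : Type*} [CommRing R]

theorem IsSymm.mul_mul_transpose [Fintype m] {X : Matrix m m R} (hX : X.IsSymm)
    (P : Matrix ι m R) : (P * X * Pᵀ).IsSymm := by
  simp [IsSymm, transpose_mul, hX.eq, Matrix.mul_assoc]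

theorem isSymm_mul_mul_transpose_iff [Fintype m] [DecidableEq m] {P : Matrix m m R}
    (hP : IsUnit P) {X : Matrix m m R} : (P * X * Pᵀ).IsSymm ↔ X.IsSymm := by
  refine ⟨fun h => ?_, fun h => h.mul_mul_transpose P⟩
  have hinv : P⁻¹ * P = 1 := nonsing_inv_mul P ((isUnit_iff_isUnit_det P).mp hP)
  have hinvT : Pᵀ * P⁻¹ᵀ = 1 := by rw [← transpose_mul, hinv, transpose_one]
  have hX : P⁻¹ * (P * X * Pᵀ) * P⁻¹ᵀ = X := by
    rw [show P⁻¹ * (P * X * Pᵀ) * P⁻¹ᵀ = P⁻¹ * P * X * (Pᵀ * P⁻¹ᵀ) by simp only [Matrix.mul_assoc],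
      hinv, hinvT, Matrix.one_mul, Matrix.mul_one]
  exact hX ▸ h.mul_mul_transpose P⁻¹

theorem isSymm_sum_smul_iff [Fintype ι] [DecidableEq ι] {P : Matrix ι ι R} (hP : IsUnit P)
    (X : ι → Matrix m m R) : (∀ j, (∑ b, P b j • X b).IsSymm) ↔ ∀ b, (X b).IsSymm := by
  have hcomb (Q : Matrix ι ι R) (Y : ι → Matrix m m R) (hY : ∀ b, (Y b).IsSymm) (j : ι) :
      (∑ b, Q b j • Y b).IsSymm := by
    simp [IsSymm, transpose_sum, (hY _).eq]
  refine ⟨fun h c => ?_, hcomb P X⟩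
  have hPP : P * P⁻¹ = 1 := mul_nonsing_inv P ((isUnit_iff_isUnit_det P).mp hP)
  have hX : X c = ∑ j, P⁻¹ j c • ∑ b, P b j • X b := by
    simp_rw [Finset.smul_sum, smul_smul]
    rw [Finset.sum_comm]
    simp_rw [← Finset.sum_smul, mul_comm (P⁻¹ _ c), ← mul_apply, hPP, one_apply]
    simp
  exact hX ▸ hcomb P⁻¹ _ h c

end Matrix

section EntrywiseFDeriv

variable {𝕜 E m n p : Type*} [NontriviallyNormedField 𝕜] [NormedAddCommGroup E]
  [NormedSpace 𝕜 E]

noncomputable def entrywiseFDeriv (A : E → Matrix m n 𝕜) (z v : E) : Matrix m n 𝕜 :=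
  of fun i j => fderiv 𝕜 (fun w => A w i j) z v

variable [Fintype m] {z : E}

theorem entrywiseFDeriv_mul {A : E → Matrix p m 𝕜} {B : E → Matrix m n 𝕜}
    (hA : ∀ i j, DifferentiableAt 𝕜 (fun w => A w i j) z)
    (hB : ∀ i j, DifferentiableAt 𝕜 (fun w => B w i j) z) (v : E) :
    entrywiseFDeriv (fun w => A w * B w) z v
      = entrywiseFDeriv A z v * B z + A z * entrywiseFDeriv B z v := by
  ext i j
  simp only [entrywiseFDeriv, mul_apply, of_apply, Matrix.add_apply]
  rw [fderiv_fun_sum fun k _ => (hA i k).fun_mul (hB k j), _root_.sum_apply,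
    ← Finset.sum_add_distrib]
  refine Finset.sum_congr rfl fun k _ => ?_
  rw [fderiv_fun_mul (hA i k) (hB k j)]
  simp only [_root_.add_apply, _root_.smul_apply, smul_eq_mul]
  ring

variable [DecidableEq m]

theorem differentiableAt_det {A : E → Matrix m m 𝕜}
    (hA : ∀ i j, DifferentiableAt 𝕜 (fun w => A w i j) z) :
    DifferentiableAt 𝕜 (fun w => (A w).det) z := by
  simp only [det_apply']
  fun_prop

theorem differentiableAt_inv_apply {A : E → Matrix m m 𝕜}
    (hA : ∀ i j, DifferentiableAt 𝕜 (fun w => A w i j) z) (hdet : IsUnit (A z).det) (i j : m) :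
    DifferentiableAt 𝕜 (fun w => (A w)⁻¹ i j) z := by
  simp only [Matrix.inv_def, Matrix.smul_apply, Ring.inverse_eq_inv', adjugate_apply, smul_eq_mul]
  refine ((differentiableAt_det hA).inv hdet.ne_zero).mul (differentiableAt_det fun a b => ?_)
  by_cases h : a = j
  · simp only [updateRow_apply, if_pos h, differentiableAt_const]
  · simp only [updateRow_apply, if_neg h, hA a b]

theorem entrywiseFDeriv_inv {A : E → Matrix m m 𝕜}
    (hA : ∀ i j, DifferentiableAt 𝕜 (fun w => A w i j) z) (hdet : IsUnit (A z).det) (v : E) :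
    entrywiseFDeriv (fun w => (A w)⁻¹) z v
      = -((A z)⁻¹ * entrywiseFDeriv A z v * (A z)⁻¹) := by
  have hlocal : (fun w => A w * (A w)⁻¹) =ᶠ[𝓝 z] fun _ => 1 := by
    filter_upwards [(differentiableAt_det hA).continuousAt.eventually_ne hdet.ne_zero] with w hw
    exact mul_nonsing_inv _ (isUnit_iff_ne_zero.mpr hw)
  have hzero : entrywiseFDeriv (fun w => A w * (A w)⁻¹) z v = 0 := by
    ext i j
    have hij : (fun w => (A w * (A w)⁻¹) i j) =ᶠ[𝓝 z] fun _ => (1 : Matrix m m 𝕜) i j :=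
      hlocal.mono fun _ hw => congrArg (fun M : Matrix m m 𝕜 => M i j) hw
    rw [entrywiseFDeriv, of_apply, hij.fderiv_eq, fderiv_const_apply, Matrix.zero_apply,
      _root_.zero_apply]
  rw [entrywiseFDeriv_mul hA (differentiableAt_inv_apply hA hdet)] at hzero
  calc entrywiseFDeriv (fun w => (A w)⁻¹) z v
      = (A z)⁻¹ * (A z * entrywiseFDeriv (fun w => (A w)⁻¹) z v) := by
        rw [← Matrix.mul_assoc, nonsing_inv_mul _ hdet, Matrix.one_mul]
    _ = -((A z)⁻¹ * entrywiseFDeriv A z v * (A z)⁻¹) := by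
        rw [eq_neg_of_add_eq_zero_right hzero, Matrix.mul_neg, Matrix.mul_assoc]

end EntrywiseFDeriv

section ColumnJacobian

variable {m n n' R : Type*}

/-- With `dA l` read as `∂A/∂zˡ`, this is the Jacobian `(∂A_{ij}/∂zˡ)_{i,l}` of the `j`-th column
of `A`. -/
def columnJacobian (dA : m → Matrix m n R) (j : n) : Matrix m m R :=
  of fun i l => dA l i j

theorem columnJacobian_mul_mul [CommRing R] [Fintype m] [Fintype n] (P : Matrix m m R)
    (dA : m → Matrix m n R) (Q : Matrix n n' R) (j : n') :
    columnJacobian (fun l => P * dA l * Q) j = ∑ b, Q b j • (P * columnJacobian dA b) := by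
  ext i l
  simp only [columnJacobian, mul_apply, of_apply, Matrix.sum_apply, Matrix.smul_apply, smul_eq_mul,
    Finset.sum_mul, Finset.mul_sum]
  simp only [mul_comm (Q _ j)]

theorem forall_isSymm_columnJacobian_iff (dA : m → Matrix m n R) :
    (∀ j, (columnJacobian dA j).IsSymm) ↔ ∀ i j l, dA l i j = dA i l j := by
  simp only [IsSymm.ext_iff, columnJacobian, of_apply]
  exact ⟨fun h i j l => h j l i, fun h j i l => h l j i⟩

theorem isSymm_mul_transpose_columnJacobian_iff [CommRing R] [Fintype m] (S : Matrix m m R)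
    (dA : m → Matrix m m R) (l : m) :
    (S * (columnJacobian dA l)ᵀ).IsSymm ↔
      ∀ i k, ∑ j, S i j * dA j k l = ∑ j, S k j * dA j i l := by
  simp only [IsSymm.ext_iff, columnJacobian, mul_apply, transpose_apply, of_apply]
  exact ⟨fun h i k => h k i, fun h i k => h k i⟩

theorem inv_partials_symm_iff_brackets_vanish [CommRing R] [Fintype m] [DecidableEq m]
    {S : Matrix m m R} (hS : IsUnit S.det) (dS : m → Matrix m m R) :
    (∀ i j l, (-(S⁻¹ * dS l * S⁻¹)) i j = (-(S⁻¹ * dS i * S⁻¹)) l j) ↔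
      ∀ i k l, ∑ j, S i j * dS j k l = ∑ j, S k j * dS j i l := by
  have hSu : IsUnit S := (isUnit_iff_isUnit_det S).mpr hS
  calc (∀ i j l, (-(S⁻¹ * dS l * S⁻¹)) i j = (-(S⁻¹ * dS i * S⁻¹)) l j)
      ↔ ∀ j, (columnJacobian (fun l => S⁻¹ * dS l * S⁻¹) j).IsSymm := by
        simp only [Matrix.neg_apply, neg_inj, forall_isSymm_columnJacobian_iff]
    _ ↔ ∀ b, (S⁻¹ * columnJacobian dS b).IsSymm := by
        simp only [columnJacobian_mul_mul]
        exact isSymm_sum_smul_iff (isUnit_nonsing_inv_iff.mpr hSu) _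
    _ ↔ ∀ b, (S * (columnJacobian dS b)ᵀ).IsSymm := by
        refine forall_congr' fun b => ?_
        have hconj : S * (S⁻¹ * columnJacobian dS b) * Sᵀ = columnJacobian dS b * Sᵀ := by
          rw [← Matrix.mul_assoc, mul_nonsing_inv _ hS, Matrix.one_mul]
        rw [← isSymm_mul_mul_transpose_iff hSu, hconj, ← isSymm_transpose_iff, transpose_mul,
          transpose_transpose]
    _ ↔ _ := by
        simp only [isSymm_mul_transpose_columnJacobian_iff]
        exact ⟨fun h i k l => h l i k, fun h l i k => h i k l⟩

end ColumnJacobian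

/-- for a holomorphic matrix `S = (sⁱᵏ)` of vector-field components, invertible
everywhere on an open set `U ⊆ ℂⁿ`, with inverse `σ = (s_{ij})`, the symmetry condition
`∂s_{ij}/∂zˡ = ∂s_{lj}/∂zⁱ` holds on `U` iff the Lie brackets of the vector fields vanish,
i.e. `sⁱʲ ∂sᵏˡ/∂zʲ = sᵏʲ ∂sⁱˡ/∂zʲ` (sum over `j`) for all `i,k,l` on `U`. -/
theorem kaehler_iff_commute {n : ℕ} (U : Set (Fin n → ℂ)) (hU : IsOpen U)
    (S : (Fin n → ℂ) → Matrix (Fin n) (Fin n) ℂ)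
    (hS : ∀ i j : Fin n, DifferentiableOn ℂ (fun z => S z i j) U)
    (hinv : ∀ z ∈ U, IsUnit (S z).det) :
    (∀ z ∈ U, ∀ i j l : Fin n,
        wderiv l (fun w => (S w)⁻¹ i j) z = wderiv i (fun w => (S w)⁻¹ l j) z)
      ↔
    (∀ z ∈ U, ∀ i k l : Fin n,
        ∑ j : Fin n, S z i j * wderiv j (fun w => S w k l) z
          = ∑ j : Fin n, S z k j * wderiv j (fun w => S w i l) z) := by
  refine forall₂_congr fun z hz => ?_
  have hSz : ∀ i j, DifferentiableAt ℂ (fun w => S w i j) z :=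
    fun i j => (hS i j).differentiableAt (hU.mem_nhds hz)
  have hσz := differentiableAt_inv_apply hSz (hinv z hz)
  have key := inv_partials_symm_iff_brackets_vanish (hinv z hz)
    fun l => entrywiseFDeriv S z (Pi.single l 1)
  simp only [← entrywiseFDeriv_inv hSz (hinv z hz)] at key
  simpa only [entrywiseFDeriv, of_apply, wderiv_eq_fderiv (hσz _ _), wderiv_eq_fderiv (hSz _ _)]
    using key
end

section
/- Let Λ ⊂ ℂⁿ be a discrete subgroup such that the real span Λ ⊗ ℝ equals ℂᵏ ⊕ Re(ℂˡ) ⊕ 0 in a decomposition ℂⁿ = ℂᵏ ⊕ ℂˡ ⊕ ℂ^{n−k−l} (i.e., Λ_ℝ is spanned by the real standard basis of ℂᵏ = ℝ^{2k} together with the real parts of ℂˡ). Let ω be a constant-coefficient real (1,1)-form on ℂⁿ/Λ with matrix ω̲ = (ω_{ij}). If for every pair λ₁, λ₂ ∈ Λ one has Im(λ₁ᵗ ω̲ conj(λ₂)) = 0, then in the block decomposition with respect to ℂⁿ = ℂᵏ ⊕ ℂˡ ⊕ ℂ^{n−k−l}, the (k,k)-block of ω̲ vanishes, the (k,l) and (l,k)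 blocks vanish, and the (l,l)-block is real. -/
/-- let `Λ ⊂ ℂⁿ` be a discrete subgroup whose real span is
`ℂᵏ ⊕ Re(ℂˡ) ⊕ 0` (in coordinates: the first `k` coordinates free, the next `l` real, the
rest zero).  If `ω̲ = (ω_{ij})` is (the matrix of) a constant-coefficient (1,1)-form such that
`Im(λ₁ᵗ ω̲ conj(λ₂)) = 0` for all `λ₁, λ₂ ∈ Λ`, then the `(k,k)`-block of `ω̲` vanishes, the
`(k,l)` and `(l,k)` blocks vanish, and the `(l,l)`-block is real. -/
theorem block_structure_of_exact_form {n k l : ℕ} (hkl : k + l ≤ n)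
    (Λ : AddSubgroup (Fin n → ℂ))
    (hspan : (Submodule.span ℝ (Λ : Set (Fin n → ℂ)) : Set (Fin n → ℂ)) =
      {z : Fin n → ℂ | (∀ i : Fin n, k ≤ (i : ℕ) → (z i).im = 0) ∧
        (∀ i : Fin n, k + l ≤ (i : ℕ) → z i = 0)})
    (ω : Matrix (Fin n) (Fin n) ℂ)
    (hω : ∀ l₁ ∈ Λ, ∀ l₂ ∈ Λ,
      (∑ i : Fin n, ∑ j : Fin n, l₁ i * ω i j * (starRingEnd ℂ) (l₂ j)).im = 0) :
    ∀ i j : Fin n,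
      ((i : ℕ) < k → (j : ℕ) < k + l → ω i j = 0) ∧
      ((j : ℕ) < k → (i : ℕ) < k + l → ω i j = 0) ∧
      (k ≤ (i : ℕ) → (i : ℕ) < k + l → k ≤ (j : ℕ) → (j : ℕ) < k + l → (ω i j).im = 0) := by
  set F : (Fin n → ℂ) → (Fin n → ℂ) → ℂ :=
    fun x y => ∑ i : Fin n, ∑ j : Fin n, x i * ω i j * (starRingEnd ℂ) (y j) with hF
  -- F vanishes (imaginary part) on span × span
  have key : ∀ x ∈ Submodule.span ℝ (Λ : Set (Fin n → ℂ)),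
      ∀ y ∈ Submodule.span ℝ (Λ : Set (Fin n → ℂ)), (F x y).im = 0 := by
    intro x hx
    induction hx using Submodule.span_induction with
    | mem x hxΛ =>
      intro y hy
      induction hy using Submodule.span_induction with
      | mem y hyΛ => exact hω x hxΛ y hyΛ
      | zero => simp [hF]
      | add y z _ _ hy hz =>
        have : F x (y + z) = F x y + F x z := by
          simp [hF, Pi.add_apply, map_add, mul_add, Finset.sum_add_distrib]
        rw [this, Complex.add_im, hy, hz, add_zero]
      | smul c y _ hy =>
        have : F x (c • y) = (c : ℂ) * F x y := by
          simp only [hF, Pi.smul_apply, Complex.real_smul, map_mul, Complex.conj_ofReal,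
            Finset.mul_sum]
          congr 1; ext i; congr 1; ext j; ring
        rw [this, Complex.mul_im, Complex.ofReal_im, Complex.ofReal_re, hy]
        ring
    | zero => intro y hy; simp [hF]
    | add x z _ _ hx hz =>
      intro y hy
      have : F (x + z) y = F x y + F z y := by
        simp [hF, Pi.add_apply, add_mul, Finset.sum_add_distrib]
      rw [this, Complex.add_im, hx y hy, hz y hy, add_zero]
    | smul c x _ hx =>
      intro y hy
      have : F (c • x) y = (c : ℂ) * F x y := by
        simp only [hF, Pi.smul_apply, Complex.real_smul, Finset.mul_sum]
        congr 1; ext i; congr 1; ext j; ring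
      rw [this, Complex.mul_im, Complex.ofReal_im, Complex.ofReal_re, hx y hy]
      ring
  -- membership of singles
  have memS : ∀ (a : Fin n) (c : ℂ), (a : ℕ) < k + l → ((k : ℕ) ≤ a → c.im = 0) →
      Pi.single a c ∈ Submodule.span ℝ (Λ : Set (Fin n → ℂ)) := by
    intro a c ha hc
    have : Pi.single a c ∈ (Submodule.span ℝ (Λ : Set (Fin n → ℂ)) : Set (Fin n → ℂ)) := by
      rw [hspan]
      refine ⟨fun i hi => ?_, fun i hi => ?_⟩
      · rcases eq_or_ne i a with rfl | hne
        · simpa using hc hi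
        · simp [Pi.single_apply, hne]
      · have hne : i ≠ a := by
          intro h; subst h; omega
        simp [Pi.single_apply, hne]
    exact this
  -- value of F on singles
  have Fval : ∀ (a b : Fin n) (c d : ℂ),
      F (Pi.single a c) (Pi.single b d) = c * ω a b * (starRingEnd ℂ) d := by
    intro a b c d
    simp only [hF, Pi.single_apply, ite_mul, zero_mul, apply_ite (starRingEnd ℂ), map_zero, mul_ite, mul_zero]
    rw [Finset.sum_eq_single a]
    · rw [Finset.sum_eq_single b] <;> simp +contextual
    · intro i _ hi; simp [hi]
    · simp
  intro i j
  refine ⟨fun hi hj => ?_, fun hj hi => ?_, fun hk1 hk2 hk3 hk4 => ?_⟩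
  · have h1 := key _ (memS i 1 (by omega) (by omega)) _ (memS j 1 hj (fun _ => by simp))
    have h2 := key _ (memS i Complex.I (by omega) (by omega)) _
      (memS j 1 hj (fun _ => by simp))
    rw [Fval] at h1 h2
    simp only [one_mul, map_one, mul_one] at h1 h2
    apply Complex.ext
    · simpa [Complex.mul_im] using h2
    · exact h1
  · have h1 := key _ (memS i 1 hi (fun _ => by simp)) _ (memS j 1 (by omega) (by omega))
    have h2 := key _ (memS i 1 hi (fun _ => by simp)) _
      (memS j Complex.I (by omega) (by omega))
    rw [Fval] at h1 h2
    simp only [one_mul, map_one, mul_one] at h1 h2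
    apply Complex.ext
    · simp only [Complex.conj_I, mul_neg, Complex.neg_im, Complex.mul_im,
        Complex.I_re, Complex.I_im] at h2
      simpa using h2
    · exact h1
  · have h1 := key _ (memS i 1 hk2 (fun _ => by simp)) _ (memS j 1 hk4 (fun _ => by simp))
    rw [Fval] at h1
    simpa using h1
end
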